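/- arXiv:math/0009002 — 2 statements merged into one kernel-verified Lean document; each statement's English description precedes it below -/
import Mathlib

section
/- Let Q ∈ ℂ[t] and q ≥ 2 a natural number. Suppose that for every primitive or non-primitive q-th root of unity ζ ≠ 1, the polynomial Q(t) − Q(ζt) has t = 0 as its only root (or is identically zero). Then Q can be written as Q(t) = b t^p + F(t^q) for some b ∈ ℂ, a natural number p, and a polynomial F ∈ ℂ[t]. -/
/-!
Let `ζ` be a primitive `q`-th root of unity. The coefficient of `t ^ n` in `Q(t) - Q(ζ t)` is
`(1 - ζ ^ n)` times that of `Q`, so it vanishes exactly when `q ∣ n` or `Q` has no `t ^ n` term.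
A complex polynomial whose only root is `0` is a monomial `c t ^ m`; hence every exponent of `Q`
not divisible by `q` equals `m`, and the part of `Q` supported on multiples of `q` is `F(t ^ q)`.
-/

open Polynomial

namespace Polynomial

theorem eq_C_leadingCoeff_mul_X_pow_of_eval_eq_zero {K : Type*} [Field K] [IsAlgClosed K]
    {R : K[X]} (h : ∀ t : K, R.eval t = 0 → t = 0) :
    R = C R.leadingCoeff * X ^ R.natDegree := by
  have hR : R ≠ 0 := fun hR => one_ne_zero (h 1 (by simp [hR]))
  have hcard : R.roots.card = R.natDegree := splits_iff_card_roots.mp (IsAlgClosed.splits R)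
  have hroots : R.roots = Multiset.replicate R.natDegree 0 :=
    Multiset.eq_replicate.mpr ⟨hcard, fun t ht => h t ((mem_roots hR).mp ht)⟩
  simpa [hroots] using (C_leadingCoeff_mul_prod_multiset_X_sub_C hcard).symm

theorem coeff_eq_zero_of_coeff_sub_comp_C_mul_X_eq_zero {R : Type*} [CommRing R] [IsDomain R]
    {Q : R[X]} {ζ : R} {q n : ℕ} (hζ : IsPrimitiveRoot ζ q) (hn : ¬ q ∣ n)
    (hcoeff : (Q - Q.comp (C ζ * X)).coeff n = 0) : Q.coeff n = 0 := by
  have hζn : 1 - ζ ^ n ≠ 0 := sub_ne_zero.mpr fun h1 => hn ((hζ.pow_eq_one_iff_dvd n).mp h1.symm)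
  rw [coeff_sub, comp_C_mul_X_coeff, ← mul_one_sub] at hcoeff
  exact (mul_eq_zero.mp hcoeff).resolve_right hζn

theorem exists_eq_C_mul_X_pow_add_expand {R : Type*} [CommSemiring R] {Q : R[X]} {q m : ℕ}
    (hq : q ≠ 0) (hcoeff : ∀ n, ¬ q ∣ n → n ≠ m → Q.coeff n = 0) :
    ∃ b : R, ∃ F : R[X], Q = C b * X ^ m + expand R q F := by
  refine ⟨if q ∣ m then 0 else Q.coeff m, contract q Q, ext fun n => ?_⟩
  rw [coeff_add, coeff_C_mul_X_pow, coeff_expand (Nat.pos_of_ne_zero hq), coeff_contract hq]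
  by_cases hqn : q ∣ n
  · rw [if_pos hqn, Nat.div_mul_cancel hqn]
    split_ifs with hnm <;> simp_all
  · rw [if_neg hqn, add_zero]
    by_cases hnm : n = m
    · subst hnm; simp [hqn]
    · rw [if_neg hnm]; exact hcoeff n hqn hnm

end Polynomial

/-- If for every `q`-th root of unity `ζ ≠ 1` the polynomial `Q(t) − Q(ζ t)` is either
identically zero or has `t = 0` as its only root, then `Q(t) = b t^p + F(t^q)` for some
`b ∈ ℂ`, `p ∈ ℕ` and `F ∈ ℂ[t]`. -/
theorem stmt_1 (Q : Polynomial ℂ) (q : ℕ) (hq : 2 ≤ q)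
    (h : ∀ ζ : ℂ, ζ ^ q = 1 → ζ ≠ 1 →
      (Q - Q.comp (Polynomial.C ζ * Polynomial.X) = 0 ∨
        ∀ t : ℂ, (Q - Q.comp (Polynomial.C ζ * Polynomial.X)).eval t = 0 → t = 0)) :
    ∃ (b : ℂ) (p : ℕ) (F : Polynomial ℂ),
      Q = Polynomial.C b * Polynomial.X ^ p + F.comp (Polynomial.X ^ q) := by
  obtain ⟨ζ, hζ⟩ : ∃ ζ : ℂ, IsPrimitiveRoot ζ q := ⟨_, Complex.isPrimitiveRoot_exp q (by omega)⟩
  obtain ⟨c, m, hmonomial⟩ : ∃ (c : ℂ) (m : ℕ), Q - Q.comp (C ζ * X) = C c * X ^ m := by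
    rcases h ζ hζ.pow_eq_one (hζ.ne_one (by omega)) with hzero | hroots
    · exact ⟨0, 0, by simp [hzero]⟩
    · exact ⟨_, _, eq_C_leadingCoeff_mul_X_pow_of_eval_eq_zero hroots⟩
  obtain ⟨b, F, hQ⟩ := exists_eq_C_mul_X_pow_add_expand (Q := Q) (m := m) (by omega)
    fun n hqn hnm => coeff_eq_zero_of_coeff_sub_comp_C_mul_X_eq_zero hζ hqn
      (by rw [hmonomial, coeff_C_mul_X_pow, if_neg hnm])
  exact ⟨b, m, F, hQ⟩
end

section
/- Intersection multiplicity computation: with ℓ₁(y,z) = y + a_{s−1}z² + ⋯ + a₀z^{s+1}, p, q ≥ 1, and distinct nonzero α_i ≠ α_j, the intersection multiplicity at the origin of the germs (ℓ₁^q − α_i z^{p+q(s+1)} = 0) and (ℓ₁^q − α_j z^{p+q(s+1)} = 0) equals q·(p + q(s+1)). -/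
set_option maxHeartbeats 1000000
set_option synthInstance.maxHeartbeats 400000


/-- The local intersection multiplicity of two plane curve germs `f, g` at the
origin: `m₀(f,g) = dim_ℂ ℂ[[y,z]]/(f,g)`.  The variable `X 0` plays the role of
`y` and `X 1` the role of `z`. -/
noncomputable def interMult (f g : MvPowerSeries (Fin 2) ℂ) : ℕ :=
  Module.finrank ℂ (MvPowerSeries (Fin 2) ℂ ⧸ Ideal.span {f, g})

open MvPowerSeries

section AuxShear

open Polynomial PowerSeries

set_option linter.unusedSectionVars false

section Shear
variable {A : Type*} [CommRing A]

/-- factor lemma: (x+y)^q = x^q + y*v -/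
lemma pow_add_factor (x y : A) (q : ℕ) : ∃ v : A, (x + y) ^ q = x ^ q + y * v := by
  induction q with
  | zero => exact ⟨0, by simp⟩
  | succ q ih =>
    obtain ⟨v, hv⟩ := ih
    exact ⟨x ^ q + v * x + v * y, by rw [pow_succ, hv]; ring⟩

lemma shear_cancel (w : A) (K : ℕ) (hw : w ^ K = 0) (d : ℕ)
    (F V : PowerSeries A) (hF : F = PowerSeries.X ^ d + PowerSeries.C (R := A) w * V)
    (k R : PowerSeries A) (hR : ∀ n, d ≤ n → PowerSeries.coeff (R := A) n R = 0)
    (hk : F * k = R) : k = 0 := by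
  have key : ∀ j : ℕ, ∀ n : ℕ, PowerSeries.coeff (R := A) n k ∈ Ideal.span {w} ^ j := by
    intro j
    induction j with
    | zero => intro n; simp
    | succ j ih =>
      intro n
      have hXk : (PowerSeries.X ^ d : PowerSeries A) * k
          = R - PowerSeries.C (R := A) w * (V * k) := by
        rw [← hk, hF]; ring
      have h1 : PowerSeries.coeff (R := A) n k
          = - (w * PowerSeries.coeff (R := A) (n + d) (V * k)) := by
        have := congrArg (PowerSeries.coeff (R := A) (n + d)) hXk
        rw [PowerSeries.coeff_X_pow_mul] at this
        rw [this, map_sub, hR _ (Nat.le_add_left _ _), PowerSeries.coeff_C_mul]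
        ring
      have h2 : PowerSeries.coeff (R := A) (n + d) (V * k) ∈ Ideal.span {w} ^ j := by
        rw [PowerSeries.coeff_mul]
        exact Ideal.sum_mem _ fun p _ => Ideal.mul_mem_left _ _ (ih p.2)
      rw [h1, pow_succ']
      exact neg_mem (Ideal.mul_mem_mul (Ideal.subset_span rfl) h2)
  ext n
  have := key K n
  rw [Ideal.span_singleton_pow, hw] at this
  simp only [Ideal.span_singleton_eq_bot.mpr rfl, Ideal.mem_bot] at this
  simp [this]
end Shear

section ShearEquiv
variable {A : Type*} [CommRing A] [Nontrivial A]
variable (S : Type*) [CommRing S] [Algebra S A]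

noncomputable def coePSAlgHom : A[X] →ₐ[S] PowerSeries A :=
  { Polynomial.coeToPowerSeries.ringHom with
    commutes' := fun s => by
      simp only [RingHom.toMonoidHom_eq_coe, OneHom.toFun_eq_coe, MonoidHom.toOneHom_coe,
        MonoidHom.coe_coe, Polynomial.coeToPowerSeries.ringHom_apply]
      rw [Polynomial.algebraMap_apply, PowerSeries.algebraMap_apply]
      simp [Polynomial.coe_C] }

@[simp] lemma coePSAlgHom_apply (h : A[X]) : coePSAlgHom S h = (h : PowerSeries A) := rfl

noncomputable def shearHom (F : A[X]) :
    A[X] →ₐ[S] PowerSeries A ⧸ Ideal.span {(F : PowerSeries A)} :=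
  (Ideal.Quotient.mkₐ S _).comp (coePSAlgHom S)

variable (w : A) (K : ℕ) (hw : w ^ K = 0) (F : A[X]) (hmF : F.Monic)
  (V : PowerSeries A)
  (hF : (F : PowerSeries A) = PowerSeries.X ^ F.natDegree + PowerSeries.C (R := A) w * V)

include hw hF in
lemma shear_X_pow_mem :
    (PowerSeries.X : PowerSeries A) ^ (F.natDegree * K)
      ∈ Ideal.span {(F : PowerSeries A)} := by
  rw [← Ideal.Quotient.eq_zero_iff_mem]
  have hFmem : (F : PowerSeries A) ∈ Ideal.span {(F : PowerSeries A)} :=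
    Ideal.subset_span rfl
  have h0 : (Ideal.Quotient.mk (Ideal.span {(F : PowerSeries A)}))
      (PowerSeries.X ^ F.natDegree)
      = (Ideal.Quotient.mk _) (- (PowerSeries.C (R := A) w * V)) := by
    rw [Ideal.Quotient.mk_eq_mk_iff_sub_mem]
    have : (PowerSeries.X : PowerSeries A) ^ F.natDegree
        - (- (PowerSeries.C (R := A) w * V)) = F := by rw [hF]; ring
    rwa [this]
  rw [pow_mul, map_pow, h0, ← map_pow, neg_pow, mul_pow, ← map_pow, hw, map_zero,
    zero_mul, mul_zero, map_zero]

include hw hF in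
lemma shear_surj : Function.Surjective (shearHom S F) := by
  intro x
  obtain ⟨f, rfl⟩ := Ideal.Quotient.mk_surjective x
  refine ⟨PowerSeries.trunc (F.natDegree * K) f, ?_⟩
  have : shearHom S F (PowerSeries.trunc (F.natDegree * K) f)
      = (Ideal.Quotient.mk _) ((PowerSeries.trunc (F.natDegree * K) f : A[X]) :
        PowerSeries A) := rfl
  rw [this, Ideal.Quotient.mk_eq_mk_iff_sub_mem]
  have hdvd : (PowerSeries.X : PowerSeries A) ^ (F.natDegree * K) ∣
      ((PowerSeries.trunc (F.natDegree * K) f : A[X]) : PowerSeries A) - f := by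
    rw [PowerSeries.X_pow_dvd_iff]
    intro m hm
    rw [map_sub, Polynomial.coeff_coe, PowerSeries.coeff_trunc, if_pos hm, sub_self]
  obtain ⟨c, hc⟩ := hdvd
  rw [hc]
  exact Ideal.mul_mem_right _ _ (shear_X_pow_mem w K hw F V hF)

include hw hmF hF in
lemma shear_ker : RingHom.ker (shearHom S F) = Ideal.span {F} := by
  ext h
  constructor
  · intro hh
    have hmem : ((h : PowerSeries A)) ∈ Ideal.span {(F : PowerSeries A)} := by
      rwa [RingHom.mem_ker, shearHom, AlgHom.comp_apply, coePSAlgHom_apply,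
        Ideal.Quotient.mkₐ_eq_mk, Ideal.Quotient.eq_zero_iff_mem] at hh
    rw [Ideal.mem_span_singleton] at hmem ⊢
    obtain ⟨g, hg⟩ := hmem
    -- division
    have hdiv := Polynomial.modByMonic_add_div h F
    have hmod : (h %ₘ F) = h - F * (h /ₘ F) := (eq_sub_of_add_eq hdiv)
    have hco : ((h %ₘ F : A[X]) : PowerSeries A)
        = (F : PowerSeries A) * (g - ((h /ₘ F : A[X]) : PowerSeries A)) := by
      rw [hmod, Polynomial.coe_sub, Polynomial.coe_mul, hg]; ring
    have hz : (g - ((h /ₘ F : A[X]) : PowerSeries A)) = 0 := by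
      refine shear_cancel w K hw F.natDegree (F : PowerSeries A) V hF _
        ((h %ₘ F : A[X]) : PowerSeries A) ?_ hco.symm
      intro n hn
      rw [Polynomial.coeff_coe]
      refine Polynomial.coeff_eq_zero_of_degree_lt ?_
      refine lt_of_lt_of_le (Polynomial.degree_modByMonic_lt h hmF)
        (le_trans Polynomial.degree_le_natDegree ?_)
      exact_mod_cast Nat.cast_le.mpr hn
    rw [hz, mul_zero, ← Polynomial.coe_zero, Polynomial.coe_inj] at hco
    refine ⟨h /ₘ F, ?_⟩
    rw [hco, zero_add] at hdiv
    exact hdiv.symm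
  · intro hh
    rw [Ideal.mem_span_singleton] at hh
    obtain ⟨c, rfl⟩ := hh
    rw [RingHom.mem_ker]
    have : shearHom S F (F * c) = (Ideal.Quotient.mk _) ((F * c : A[X]) : PowerSeries A) := rfl
    rw [this, Ideal.Quotient.eq_zero_iff_mem, Polynomial.coe_mul]
    exact Ideal.mul_mem_right _ _ (Ideal.subset_span rfl)

noncomputable def shearAlgEquiv :
    AdjoinRoot F ≃ₐ[S] (PowerSeries A ⧸ Ideal.span {(F : PowerSeries A)}) :=
  (Ideal.quotientEquivAlgOfEq S (shear_ker S w K hw F hmF V hF).symm).trans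
    (Ideal.quotientKerAlgEquivOfSurjective (shear_surj S w K hw F V hF))

include hw hmF hF in
lemma shear_finrank [StrongRankCondition S] [Module.Free S A] :
    Module.finrank S (PowerSeries A ⧸ Ideal.span {(F : PowerSeries A)})
      = Module.finrank S A * F.natDegree := by
  have e := shearAlgEquiv S w K hw F hmF V hF
  rw [← e.toLinearEquiv.finrank_eq]
  haveI : Module.Free A (AdjoinRoot F) :=
    Module.Free.of_basis (AdjoinRoot.powerBasis' hmF).basis
  rw [← Module.finrank_mul_finrank S A (AdjoinRoot F),
    (AdjoinRoot.powerBasis' hmF).finrank, AdjoinRoot.powerBasis'_dim]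

end ShearEquiv

end AuxShear

noncomputable section MvIter

def fs (m b : ℕ) : Fin 2 →₀ ℕ := Finsupp.single 0 m + Finsupp.single 1 b

@[simp] lemma fs_apply0 (m b : ℕ) : fs m b 0 = m := by
  simp [fs, Finsupp.single_apply]

@[simp] lemma fs_apply1 (m b : ℕ) : fs m b 1 = b := by
  simp [fs, Finsupp.single_apply]

lemma fs_eq (e : Fin 2 →₀ ℕ) : fs (e 0) (e 1) = e := by
  ext i
  fin_cases i
  · simpa using fs_apply0 (e 0) (e 1)
  · simpa using fs_apply1 (e 0) (e 1)

lemma fs_inj {m b m' b' : ℕ} (h : fs m b = fs m' b') : m = m' ∧ b = b' := by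
  constructor
  · have := congrArg (fun e : Fin 2 →₀ ℕ => e 0) h; simpa using this
  · have := congrArg (fun e : Fin 2 →₀ ℕ => e 1) h; simpa using this

lemma fs_add (m b m' b' : ℕ) : fs m b + fs m' b' = fs (m + m') (b + b') := by
  simp only [fs, Finsupp.single_add]
  abel

lemma fs_eq_zero_iff {m b : ℕ} : fs m b = 0 ↔ m = 0 ∧ b = 0 := by
  constructor
  · intro h
    simpa using fs_inj (by simpa [fs] using h : fs m b = fs 0 0)
  · rintro ⟨rfl, rfl⟩; simp [fs]

lemma coeff_def (e : Fin 2 →₀ ℕ) (f : MvPowerSeries (Fin 2) ℂ) :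
    MvPowerSeries.coeff (R := ℂ) e f = f e := rfl

def EtoFun (f : MvPowerSeries (Fin 2) ℂ) : PowerSeries (PowerSeries ℂ) :=
  PowerSeries.mk fun m => PowerSeries.mk fun b => MvPowerSeries.coeff (R := ℂ) (fs m b) f

def EinvFun (g : PowerSeries (PowerSeries ℂ)) : MvPowerSeries (Fin 2) ℂ :=
  fun e => PowerSeries.coeff (R := ℂ) (e 1) (PowerSeries.coeff (R := (PowerSeries ℂ)) (e 0) g)

lemma coeff_EtoFun (f : MvPowerSeries (Fin 2) ℂ) (m b : ℕ) :
    PowerSeries.coeff (R := ℂ) b (PowerSeries.coeff (R := (PowerSeries ℂ)) m (EtoFun f))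
      = MvPowerSeries.coeff (R := ℂ) (fs m b) f := by
  simp [EtoFun]

def Ering : MvPowerSeries (Fin 2) ℂ ≃+* PowerSeries (PowerSeries ℂ) where
  toFun := EtoFun
  invFun := EinvFun
  left_inv f := by
    ext e
    show MvPowerSeries.coeff (R := ℂ) e (EinvFun (EtoFun f)) = _
    rw [coeff_def]
    show PowerSeries.coeff (R := ℂ) (e 1) (PowerSeries.coeff (R := (PowerSeries ℂ)) (e 0) (EtoFun f)) = _
    rw [coeff_EtoFun, fs_eq, coeff_def]
  right_inv g := by
    ext m b
    rw [coeff_EtoFun]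
    show PowerSeries.coeff (R := ℂ) (fs m b 1) (PowerSeries.coeff (R := (PowerSeries ℂ)) (fs m b 0) g) = _
    rw [fs_apply0, fs_apply1]
  map_add' f g := by
    ext m b
    show PowerSeries.coeff (R := ℂ) b (PowerSeries.coeff (R := (PowerSeries ℂ)) m (EtoFun (f + g))) =
      PowerSeries.coeff (R := ℂ) b (PowerSeries.coeff (R := (PowerSeries ℂ)) m (EtoFun f + EtoFun g))
    simp [coeff_EtoFun, map_add]
  map_mul' f g := by
    ext m b
    show PowerSeries.coeff (R := ℂ) b (PowerSeries.coeff (R := (PowerSeries ℂ)) m (EtoFun (f * g))) =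
      PowerSeries.coeff (R := ℂ) b (PowerSeries.coeff (R := (PowerSeries ℂ)) m (EtoFun f * EtoFun g))
    rw [PowerSeries.coeff_mul, map_sum, coeff_EtoFun, MvPowerSeries.coeff_mul]
    have : ∀ p ∈ Finset.HasAntidiagonal.antidiagonal m,
        PowerSeries.coeff (R := ℂ) b (PowerSeries.coeff (R := (PowerSeries ℂ)) p.1 (EtoFun f)
          * PowerSeries.coeff (R := (PowerSeries ℂ)) p.2 (EtoFun g))
        = ∑ r ∈ Finset.HasAntidiagonal.antidiagonal b,
            MvPowerSeries.coeff (R := ℂ) (fs p.1 r.1) f * MvPowerSeries.coeff (R := ℂ) (fs p.2 r.2) g := by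
      intro p _
      rw [PowerSeries.coeff_mul]
      exact Finset.sum_congr rfl fun r _ => by rw [coeff_EtoFun, coeff_EtoFun]
    rw [Finset.sum_congr rfl this, ← Finset.sum_product']
    refine Finset.sum_nbij' (fun p => ((p.1 0, p.2 0), (p.1 1, p.2 1)))
      (fun r => (fs r.1.1 r.2.1, fs r.1.2 r.2.2)) ?_ ?_ ?_ ?_ ?_
    · rintro ⟨d, e⟩ hp
      rw [Finset.HasAntidiagonal.mem_antidiagonal] at hp
      simp only [Finset.mem_product, Finset.HasAntidiagonal.mem_antidiagonal]
      constructor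
      · have := congrArg (fun x : Fin 2 →₀ ℕ => x 0) hp
        simpa [Finsupp.add_apply] using this
      · have := congrArg (fun x : Fin 2 →₀ ℕ => x 1) hp
        simpa [Finsupp.add_apply] using this
    · rintro ⟨⟨m1, m2⟩, ⟨b1, b2⟩⟩ hr
      simp only [Finset.mem_product, Finset.HasAntidiagonal.mem_antidiagonal] at hr
      rw [Finset.HasAntidiagonal.mem_antidiagonal]
      simp only
      rw [fs_add, hr.1, hr.2]
    · rintro ⟨d, e⟩ _
      simp only [fs_eq]
    · rintro ⟨⟨m1, m2⟩, ⟨b1, b2⟩⟩ _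
      simp only [fs_apply0, fs_apply1]
    · rintro ⟨d, e⟩ _
      simp only [fs_eq]

def Ealg : MvPowerSeries (Fin 2) ℂ ≃ₐ[ℂ] PowerSeries (PowerSeries ℂ) :=
  AlgEquiv.ofRingEquiv (f := Ering) (fun x => by
    ext m b
    have h1 : Ering (algebraMap ℂ (MvPowerSeries (Fin 2) ℂ) x)
        = EtoFun ((MvPowerSeries.C (σ := Fin 2) (R := ℂ)) x) := by
      rw [MvPowerSeries.algebraMap_apply]
      simp only [Algebra.algebraMap_self, RingHom.id_apply]
      rfl
    rw [h1, coeff_EtoFun, PowerSeries.algebraMap_apply, PowerSeries.algebraMap_apply]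
    simp only [Algebra.algebraMap_self, RingHom.id_apply]
    rw [MvPowerSeries.coeff_C, PowerSeries.coeff_C]
    by_cases hm : m = 0
    · subst hm
      rw [if_pos rfl, PowerSeries.coeff_C]
      by_cases hb : b = 0
      · subst hb
        rw [if_pos (fs_eq_zero_iff.mpr ⟨rfl, rfl⟩), if_pos rfl]
      · rw [if_neg (fun h => hb (fs_eq_zero_iff.mp h).2), if_neg hb]
    · rw [if_neg (fun h => hm (fs_eq_zero_iff.mp h).1), if_neg hm, map_zero])

lemma Ealg_apply (f : MvPowerSeries (Fin 2) ℂ) : Ealg f = EtoFun f := rfl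

lemma Ealg_X0 : Ealg (MvPowerSeries.X 0 : MvPowerSeries (Fin 2) ℂ) = PowerSeries.X := by
  rw [Ealg_apply]
  ext m b
  rw [coeff_EtoFun]
  have h1 : MvPowerSeries.coeff (R := ℂ) (fs m b) (MvPowerSeries.X 0)
      = if fs m b = fs 1 0 then 1 else 0 := by
    rw [MvPowerSeries.coeff_X]
    congr 1
    simp [fs, eq_iff_iff]
  rw [h1, PowerSeries.coeff_X]
  by_cases hm : m = 1
  · subst hm
    rw [if_pos rfl]
    by_cases hb : b = 0
    · subst hb
      rw [if_pos rfl]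
      simp
    · rw [if_neg (fun h => hb (fs_inj h).2), PowerSeries.coeff_one, if_neg hb]
  · rw [if_neg (fun h => hm (fs_inj h).1), if_neg hm, map_zero]

lemma Ealg_X1 : Ealg (MvPowerSeries.X 1 : MvPowerSeries (Fin 2) ℂ)
    = PowerSeries.C (R := (PowerSeries ℂ)) PowerSeries.X := by
  rw [Ealg_apply]
  ext m b
  rw [coeff_EtoFun]
  have h1 : MvPowerSeries.coeff (R := ℂ) (fs m b) (MvPowerSeries.X 1)
      = if fs m b = fs 0 1 then 1 else 0 := by
    rw [MvPowerSeries.coeff_X]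
    congr 1
    simp [fs, eq_iff_iff]
  rw [h1, PowerSeries.coeff_C]
  by_cases hm : m = 0
  · subst hm
    rw [if_pos rfl, PowerSeries.coeff_X]
    by_cases hb : b = 1
    · subst hb
      rw [if_pos rfl, if_pos rfl]
    · rw [if_neg (fun h => hb (fs_inj h).2), if_neg hb]
  · rw [if_neg (fun h => hm (fs_inj h).1), if_neg hm, map_zero]

lemma Ealg_C (x : ℂ) : Ealg ((MvPowerSeries.C (σ := Fin 2) (R := ℂ)) x)
    = PowerSeries.C (R := (PowerSeries ℂ)) (PowerSeries.C (R := ℂ) x) := by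
  have h := Ealg.commutes x
  rw [MvPowerSeries.algebraMap_apply, PowerSeries.algebraMap_apply,
    PowerSeries.algebraMap_apply] at h
  simpa using h

end MvIter

/-- With `ℓ₁(y,z) = y + a_{s−1}z² + ⋯ + a₀z^{s+1}`, `p, q ≥ 1` and distinct nonzero
`αᵢ ≠ αⱼ`, the intersection multiplicity at the origin of
`(ℓ₁^q − αᵢ z^{p+q(s+1)} = 0)` and `(ℓ₁^q − αⱼ z^{p+q(s+1)} = 0)` is `q(p+q(s+1))`. -/
theorem stmt_11 (s p q : ℕ) (hs : 1 ≤ s) (hp : 1 ≤ p) (hq : 1 ≤ q)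
    (αi αj : ℂ) (hαi : αi ≠ 0) (hαj : αj ≠ 0) (hij : αi ≠ αj) (a : ℕ → ℂ)
    (ℓ₁ : MvPowerSeries (Fin 2) ℂ)
    (hℓ₁ : ℓ₁ = MvPowerSeries.X 0
      + ∑ j ∈ Finset.range s, (MvPowerSeries.C : ℂ →+* MvPowerSeries (Fin 2) ℂ) (a j) * MvPowerSeries.X 1 ^ (s + 1 - j)) :
    interMult
      (ℓ₁ ^ q - (MvPowerSeries.C : ℂ →+* MvPowerSeries (Fin 2) ℂ) αi * MvPowerSeries.X 1 ^ (p + q * (s + 1)))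
      (ℓ₁ ^ q - (MvPowerSeries.C : ℂ →+* MvPowerSeries (Fin 2) ℂ) αj * MvPowerSeries.X 1 ^ (p + q * (s + 1)))
      = q * (p + q * (s + 1)) := by
  classical
  unfold interMult
  obtain ⟨N, hNdef⟩ : ∃ N, p + q * (s + 1) = N := ⟨_, rfl⟩
  rw [hNdef]
  have hN1 : 1 ≤ N := hNdef ▸ le_trans hp (Nat.le_add_right p _)
  -- Step a: the ideal is (ℓ₁^q, z^N)
  have hspan : Ideal.span {ℓ₁ ^ q - (MvPowerSeries.C (σ := Fin 2) (R := ℂ)) αi * MvPowerSeries.X 1 ^ N,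
      ℓ₁ ^ q - (MvPowerSeries.C (σ := Fin 2) (R := ℂ)) αj * MvPowerSeries.X 1 ^ N}
      = Ideal.span {ℓ₁ ^ q, (MvPowerSeries.X 1 : MvPowerSeries (Fin 2) ℂ) ^ N} := by
    apply le_antisymm
    · rw [Ideal.span_le]
      have hl : ℓ₁ ^ q ∈ Ideal.span {ℓ₁ ^ q,
          (MvPowerSeries.X 1 : MvPowerSeries (Fin 2) ℂ) ^ N} :=
        Ideal.subset_span (Set.mem_insert _ _)
      have hX : (MvPowerSeries.X 1 : MvPowerSeries (Fin 2) ℂ) ^ N ∈ Ideal.span {ℓ₁ ^ q,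
          (MvPowerSeries.X 1 : MvPowerSeries (Fin 2) ℂ) ^ N} :=
        Ideal.subset_span (Set.mem_insert_of_mem _ rfl)
      rintro x hx
      rcases hx with rfl | hx
      · exact sub_mem hl (Ideal.mul_mem_left _ _ hX)
      · rcases hx with rfl
        exact sub_mem hl (Ideal.mul_mem_left _ _ hX)
    · rw [Ideal.span_le]
      set fI := ℓ₁ ^ q - (MvPowerSeries.C (σ := Fin 2) (R := ℂ)) αi * MvPowerSeries.X 1 ^ N with hfI
      set fJ := ℓ₁ ^ q - (MvPowerSeries.C (σ := Fin 2) (R := ℂ)) αj * MvPowerSeries.X 1 ^ N with hfJ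
      have hfImem : fI ∈ Ideal.span {fI, fJ} := Ideal.subset_span (Set.mem_insert _ _)
      have hfJmem : fJ ∈ Ideal.span {fI, fJ} := Ideal.subset_span (Set.mem_insert_of_mem _ rfl)
      have hne : αj - αi ≠ 0 := sub_ne_zero_of_ne (Ne.symm hij)
      have hXmem : (MvPowerSeries.X 1 : MvPowerSeries (Fin 2) ℂ) ^ N ∈ Ideal.span {fI, fJ} := by
        have hdiff : fI - fJ = (MvPowerSeries.C (σ := Fin 2) (R := ℂ)) (αj - αi) *
            (MvPowerSeries.X 1 : MvPowerSeries (Fin 2) ℂ) ^ N := by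
          rw [hfI, hfJ, map_sub]
          ring
        have hXeq : (MvPowerSeries.X 1 : MvPowerSeries (Fin 2) ℂ) ^ N
            = (MvPowerSeries.C (σ := Fin 2) (R := ℂ)) (αj - αi)⁻¹ * (fI - fJ) := by
          rw [hdiff, ← mul_assoc, ← map_mul, inv_mul_cancel₀ hne, map_one, one_mul]
        rw [hXeq]
        exact Ideal.mul_mem_left _ _ (sub_mem hfImem hfJmem)
      have hlmem : ℓ₁ ^ q ∈ Ideal.span {fI, fJ} := by
        have : ℓ₁ ^ q = fI + (MvPowerSeries.C (σ := Fin 2) (R := ℂ)) αi *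
            (MvPowerSeries.X 1 : MvPowerSeries (Fin 2) ℂ) ^ N := by
          rw [hfI]; ring
        rw [this]
        exact add_mem hfImem (Ideal.mul_mem_left _ _ hXmem)
      rintro x hx
      rcases hx with rfl | hx
      · exact hlmem
      · rcases hx with rfl
        exact hXmem
  rw [hspan]
  -- notation
  set c : PowerSeries ℂ := ∑ j ∈ Finset.range s,
    PowerSeries.C (R := ℂ) (a j) * PowerSeries.X ^ (s + 1 - j) with hc
  set t : PowerSeries ℂ := PowerSeries.X ^ N with ht
  set u : PowerSeries (PowerSeries ℂ) := PowerSeries.X + PowerSeries.C (R := (PowerSeries ℂ)) c with hu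
  -- Step b: transport through Ealg
  have hEl : Ealg ℓ₁ = u := by
    rw [hℓ₁, map_add, Ealg_X0, map_sum, hu]
    congr 1
    rw [hc, map_sum]
    refine Finset.sum_congr rfl fun j _ => ?_
    rw [map_mul, map_pow, Ealg_X1, Ealg_C, map_mul, map_pow]
  have hEX1N : Ealg ((MvPowerSeries.X 1 : MvPowerSeries (Fin 2) ℂ) ^ N)
      = PowerSeries.C (R := (PowerSeries ℂ)) t := by
    rw [map_pow, Ealg_X1, ← map_pow, ht]
  have hmape : Ideal.map (Ealg : MvPowerSeries (Fin 2) ℂ →+* PowerSeries (PowerSeries ℂ))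
      (Ideal.span {ℓ₁ ^ q, (MvPowerSeries.X 1 : MvPowerSeries (Fin 2) ℂ) ^ N})
      = Ideal.span {u ^ q, PowerSeries.C (R := (PowerSeries ℂ)) t} := by
    rw [Ideal.map_span, Set.image_pair]
    have h1 : (Ealg : MvPowerSeries (Fin 2) ℂ →+* PowerSeries (PowerSeries ℂ)) (ℓ₁ ^ q)
        = u ^ q := by
      show Ealg (ℓ₁ ^ q) = u ^ q
      rw [map_pow, hEl]
    have h2 : (Ealg : MvPowerSeries (Fin 2) ℂ →+* PowerSeries (PowerSeries ℂ))
        ((MvPowerSeries.X 1 : MvPowerSeries (Fin 2) ℂ) ^ N)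
        = PowerSeries.C (R := (PowerSeries ℂ)) t := hEX1N
    rw [h1, h2]
  have e1 := Ideal.quotientEquivAlg
    (Ideal.span {ℓ₁ ^ q, (MvPowerSeries.X 1 : MvPowerSeries (Fin 2) ℂ) ^ N})
    (Ideal.span {u ^ q, PowerSeries.C (R := (PowerSeries ℂ)) t}) Ealg hmape.symm
  rw [e1.toLinearEquiv.finrank_eq]
  -- Step c/d: kill the constant ideal
  set IB : Ideal (PowerSeries ℂ) := Ideal.span {t} with hIB
  set πr : PowerSeries (PowerSeries ℂ) →+* PowerSeries (PowerSeries ℂ ⧸ IB) :=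
    PowerSeries.map (Ideal.Quotient.mk IB) with hπr
  have hcommutes : ∀ r : ℂ, πr (algebraMap ℂ (PowerSeries (PowerSeries ℂ)) r)
      = algebraMap ℂ (PowerSeries (PowerSeries ℂ ⧸ IB)) r := by
    intro r
    rw [PowerSeries.algebraMap_apply, hπr, PowerSeries.map_C, Ideal.Quotient.mk_algebraMap,
      ← PowerSeries.algebraMap_apply]
  set π2 : PowerSeries (PowerSeries ℂ) →ₐ[ℂ] PowerSeries (PowerSeries ℂ ⧸ IB) :=
    { πr with commutes' := hcommutes } with hπ2
  have hπ2app : ∀ x, π2 x = πr x := fun x => rfl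
  have hsurj2 : Function.Surjective π2 := by
    intro g
    refine ⟨PowerSeries.mk fun n =>
      (Ideal.Quotient.mk_surjective (PowerSeries.coeff (R := (PowerSeries ℂ ⧸ IB)) n g)).choose, ?_⟩
    ext n
    rw [hπ2app, hπr, PowerSeries.coeff_map, PowerSeries.coeff_mk]
    exact (Ideal.Quotient.mk_surjective _).choose_spec
  have hker2 : RingHom.ker π2 = Ideal.span {PowerSeries.C (R := (PowerSeries ℂ)) t} := by
    ext f
    rw [RingHom.mem_ker, Ideal.mem_span_singleton]
    constructor
    · intro hf
      have hcoeff : ∀ n, t ∣ PowerSeries.coeff (R := (PowerSeries ℂ)) n f := by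
        intro n
        have h := congrArg (PowerSeries.coeff (R := (PowerSeries ℂ ⧸ IB)) n) hf
        rw [hπ2app, hπr, PowerSeries.coeff_map, map_zero] at h
        rw [← Ideal.mem_span_singleton, ← hIB, ← Ideal.Quotient.eq_zero_iff_mem]
        exact h
      refine ⟨PowerSeries.mk fun n => (hcoeff n).choose, ?_⟩
      refine PowerSeries.ext fun n => ?_
      rw [PowerSeries.coeff_C_mul, PowerSeries.coeff_mk]
      exact (hcoeff n).choose_spec
    · rintro ⟨d, rfl⟩
      rw [hπ2app, hπr, map_mul, PowerSeries.map_C]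
      have : Ideal.Quotient.mk IB t = 0 := by
        rw [Ideal.Quotient.eq_zero_iff_mem, hIB]
        exact Ideal.subset_span rfl
      rw [this, map_zero, zero_mul]
  -- nilpotent element ā
  set abar : PowerSeries ℂ ⧸ IB := Ideal.Quotient.mk IB c with habar
  have hXdvdc : (PowerSeries.X : PowerSeries ℂ) ∣ c := by
    refine ⟨∑ j ∈ Finset.range s, PowerSeries.C (R := ℂ) (a j) * PowerSeries.X ^ (s - j), ?_⟩
    rw [hc, Finset.mul_sum]
    refine Finset.sum_congr rfl fun j hj => ?_
    rw [Finset.mem_range] at hj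
    have hsj : s + 1 - j = (s - j) + 1 := by omega
    rw [hsj, pow_succ]
    ring
  have habarN : abar ^ N = 0 := by
    obtain ⟨c', hc'⟩ := hXdvdc
    rw [habar, ← map_pow, Ideal.Quotient.eq_zero_iff_mem, hIB, Ideal.mem_span_singleton, ht]
    exact ⟨c' ^ N, by rw [hc', mul_pow]⟩
  -- nontriviality of B
  haveI hBnt : Nontrivial (PowerSeries ℂ ⧸ IB) := by
    refine Ideal.Quotient.nontrivial_iff.mpr ?_
    intro hT
    have h1 : (1 : PowerSeries ℂ) ∈ IB := hT ▸ Submodule.mem_top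
    rw [hIB, Ideal.mem_span_singleton, ht, PowerSeries.X_pow_dvd_iff] at h1
    have := h1 0 hN1
    rw [PowerSeries.coeff_one] at this
    simp at this
  -- the polynomial F over B
  set F : Polynomial (PowerSeries ℂ ⧸ IB) := (Polynomial.X + Polynomial.C abar) ^ q with hF
  have hmF : F.Monic := (Polynomial.monic_X_add_C abar).pow q
  have hdegF : F.natDegree = q := by
    rw [hF, (Polynomial.monic_X_add_C abar).natDegree_pow, Polynomial.natDegree_X_add_C, mul_one]
  have hcoeF : (F : PowerSeries (PowerSeries ℂ ⧸ IB))
      = (PowerSeries.X + PowerSeries.C (R := (PowerSeries ℂ ⧸ IB)) abar) ^ q := by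
    rw [hF, Polynomial.coe_pow, Polynomial.coe_add, Polynomial.coe_X, Polynomial.coe_C]
  obtain ⟨V, hV⟩ := pow_add_factor (PowerSeries.X : PowerSeries (PowerSeries ℂ ⧸ IB))
    (PowerSeries.C (R := (PowerSeries ℂ ⧸ IB)) abar) q
  have hVF : (F : PowerSeries (PowerSeries ℂ ⧸ IB))
      = PowerSeries.X ^ F.natDegree + PowerSeries.C (R := (PowerSeries ℂ ⧸ IB)) abar * V := by
    rw [hcoeF, hdegF, hV]
  -- π2 composed with quotient by (F)
  set JB : Ideal (PowerSeries (PowerSeries ℂ ⧸ IB)) :=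
    Ideal.span {(F : PowerSeries (PowerSeries ℂ ⧸ IB))} with hJB
  set Φ2 : PowerSeries (PowerSeries ℂ) →ₐ[ℂ] (PowerSeries (PowerSeries ℂ ⧸ IB) ⧸ JB) :=
    (Ideal.Quotient.mkₐ ℂ JB).comp π2 with hΦ2
  have hπ2u : π2 (u ^ q) = (F : PowerSeries (PowerSeries ℂ ⧸ IB)) := by
    rw [map_pow, hπ2app, hπr, hu, map_add, PowerSeries.map_X, PowerSeries.map_C, hcoeF, habar]
  have hΦsurj : Function.Surjective Φ2 :=
    (Ideal.Quotient.mk_surjective).comp hsurj2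
  have hkerΦ2 : RingHom.ker Φ2 = Ideal.span {u ^ q, PowerSeries.C (R := (PowerSeries ℂ)) t} := by
    have h1 : RingHom.ker Φ2 = Ideal.comap π2 JB := by
      ext x
      rw [RingHom.mem_ker, Ideal.mem_comap, hΦ2, AlgHom.comp_apply,
        Ideal.Quotient.mkₐ_eq_mk, Ideal.Quotient.eq_zero_iff_mem]
    have h2 : JB = Ideal.map π2 (Ideal.span {u ^ q}) := by
      rw [Ideal.map_span, Set.image_singleton, hπ2u, hJB]
    rw [h1, h2, Ideal.comap_map_of_surjective' π2 hsurj2, hker2]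
    rw [← Ideal.span_union, Set.singleton_union]
  have e2 := (Ideal.quotientEquivAlgOfEq ℂ hkerΦ2.symm).trans
    (Ideal.quotientKerAlgEquivOfSurjective hΦsurj)
  rw [e2.toLinearEquiv.finrank_eq]
  -- Step e: base ring B is free of rank N over ℂ
  set F0 : Polynomial ℂ := Polynomial.X ^ N with hF0
  have hmF0 : F0.Monic := Polynomial.monic_X_pow N
  have hcoe0 : (F0 : PowerSeries ℂ) = t := by
    rw [hF0, Polynomial.coe_pow, Polynomial.coe_X, ht]
  have hdeg0 : F0.natDegree = N := Polynomial.natDegree_X_pow N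
  have hV0 : (F0 : PowerSeries ℂ) = PowerSeries.X ^ F0.natDegree + PowerSeries.C (R := ℂ) 0 * 0 := by
    rw [hcoe0, hdeg0, map_zero, zero_mul, add_zero, ht]
  have hw0 : (0 : ℂ) ^ 1 = 0 := by simp
  have e0 : AdjoinRoot F0 ≃ₐ[ℂ] (PowerSeries ℂ ⧸ IB) :=
    (shearAlgEquiv ℂ (0 : ℂ) 1 hw0 F0 hmF0 0 hV0).trans
      (Ideal.quotientEquivAlgOfEq ℂ (by rw [hcoe0, hIB]))
  haveI hfreeB : Module.Free ℂ (PowerSeries ℂ ⧸ IB) :=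
    Module.Free.of_basis ((AdjoinRoot.powerBasis' hmF0).basis.map e0.toLinearEquiv)
  have hfrB : Module.finrank ℂ (PowerSeries ℂ ⧸ IB) = N := by
    rw [← e0.toLinearEquiv.finrank_eq, (AdjoinRoot.powerBasis' hmF0).finrank,
      AdjoinRoot.powerBasis'_dim, hdeg0]
  -- Step f: final count
  rw [hJB, shear_finrank ℂ abar N habarN F hmF V hVF, hfrB, hdegF, mul_comm]
end
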